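/- Let p be a prime with p ≠ 2. Then the ring M_2(ℤ_(p)[[x]]) of 2×2 matrices over the power series ring ℤ_(p)[[x]] is very clean. -/

import Mathlib

/-- An element `a` of a ring is *very clean* if there is an idempotent `e` commuting with `a`
such that `a - e` or `a + e` is a unit. -/
def IsVeryClean {R : Type*} [Ring R] (a : R) : Prop :=
  ∃ e : R, IsIdempotentElem e ∧ a * e = e * a ∧ (IsUnit (a - e) ∨ IsUnit (a + e))

/-- A ring is *very clean* if every element is very clean. -/
def VeryCleanRing (R : Type*) [Ring R] : Prop :=
  ∀ a : R, IsVeryClean a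

/-- An element `a` of a ring is *strongly clean* if there is an idempotent `e` commuting with `a`
such that `a - e` is a unit. -/
def IsStronglyClean {R : Type*} [Ring R] (a : R) : Prop :=
  ∃ e : R, IsIdempotentElem e ∧ a * e = e * a ∧ IsUnit (a - e)

/-- A ring is *strongly clean* if every element is strongly clean. -/
def StronglyCleanRing (R : Type*) [Ring R] : Prop :=
  ∀ a : R, IsStronglyClean a

/-- For a prime `p`, the localization `ℤ_(p)` of `ℤ` at `p`, realized as the subring of `ℚ`
consisting of all fractions `m / n` with `m, n ∈ ℤ` and `p ∤ n`. -/
def ZLoc (p : ℕ) (hp : p.Prime) : Subring ℚ where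
  carrier := {x : ℚ | ∃ m n : ℤ, ¬ ((p : ℤ) ∣ n) ∧ x = m / n}
  zero_mem' := ⟨0, 1, fun h => hp.one_lt.ne' (Nat.dvd_one.mp (by exact_mod_cast h)), by simp⟩
  one_mem' := ⟨1, 1, fun h => hp.one_lt.ne' (Nat.dvd_one.mp (by exact_mod_cast h)), by simp⟩
  add_mem' := by
    rintro x y ⟨m, n, hn, rfl⟩ ⟨m', n', hn', rfl⟩
    refine ⟨m * n' + m' * n, n * n', fun h => ?_, ?_⟩
    · rcases (Int.Prime.dvd_mul' (by exact_mod_cast hp) h) with h | h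
      exacts [hn h, hn' h]
    · have h0 : (n : ℚ) ≠ 0 := Int.cast_ne_zero.mpr (fun h0 => hn (h0 ▸ dvd_zero _))
      have h0' : (n' : ℚ) ≠ 0 := Int.cast_ne_zero.mpr (fun h0 => hn' (h0 ▸ dvd_zero _))
      field_simp
      push_cast
      ring
  neg_mem' := by
    rintro x ⟨m, n, hn, rfl⟩
    exact ⟨-m, n, hn, by push_cast; ring⟩
  mul_mem' := by
    rintro x y ⟨m, n, hn, rfl⟩ ⟨m', n', hn', rfl⟩
    refine ⟨m * m', n * n', fun h => ?_, ?_⟩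
    · rcases (Int.Prime.dvd_mul' (by exact_mod_cast hp) h) with h | h
      exacts [hn h, hn' h]
    · push_cast
      rw [div_mul_div_comm]

/-!
`ℤ_(p)` is a valuation subring of `ℚ` (of `x` and `x⁻¹`, one has denominator prime to `p`),
hence local, and so is `ℤ_(p)[[x]]`; for `p ≠ 2` the element `2` is a unit there. Over a
commutative local ring in which `2` is a unit every `2 × 2` matrix `A` is very clean with
idempotent `0` or `1`: the identity `det (A - 1) + det (A + 1) - 2 det A = 2` shows that the
three determinants cannot all lie in the maximal ideal.
-/

theorem IsUnit.isVeryClean {R : Type*} [Ring R] {a : R} (h : IsUnit a) : IsVeryClean a :=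
  ⟨0, .zero, by simp, .inl (by simpa using h)⟩

theorem isVeryClean_of_isUnit_sub_one {R : Type*} [Ring R] {a : R} (h : IsUnit (a - 1)) :
    IsVeryClean a :=
  ⟨1, .one, by simp, .inl h⟩

theorem isVeryClean_of_isUnit_add_one {R : Type*} [Ring R] {a : R} (h : IsUnit (a + 1)) :
    IsVeryClean a :=
  ⟨1, .one, by simp, .inr h⟩

theorem Matrix.det_sub_one_add_det_add_one_fin_two {S : Type*} [CommRing S]
    (A : Matrix (Fin 2) (Fin 2) S) : (A - 1).det + (A + 1).det = 2 * A.det + 2 := by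
  simp [Matrix.det_fin_two]
  ring

theorem Matrix.veryCleanRing_fin_two_of_isUnit_two {S : Type*} [CommRing S] [IsLocalRing S]
    (h2 : IsUnit (2 : S)) : VeryCleanRing (Matrix (Fin 2) (Fin 2) S) := by
  intro A
  by_cases hA : IsUnit A.det
  · exact IsUnit.isVeryClean ((A.isUnit_iff_isUnit_det).mpr hA)
  by_cases hsub : IsUnit (A - 1).det
  · exact isVeryClean_of_isUnit_sub_one (((A - 1).isUnit_iff_isUnit_det).mpr hsub)
  by_cases hadd : IsUnit (A + 1).det
  · exact isVeryClean_of_isUnit_add_one (((A + 1).isUnit_iff_isUnit_det).mpr hadd)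
  exfalso
  have hmem : (A - 1).det + (A + 1).det - 2 * A.det ∈ IsLocalRing.maximalIdeal S :=
    Ideal.sub_mem _ (Ideal.add_mem _ hsub hadd) (Ideal.mul_mem_left _ 2 hA)
  rw [Matrix.det_sub_one_add_det_add_one_fin_two, add_sub_cancel_left] at hmem
  exact hmem h2

namespace ZLoc

variable (p : ℕ) (hp : p.Prime)

theorem mem_iff {x : ℚ} : x ∈ ZLoc p hp ↔ ¬ p ∣ x.den := by
  constructor
  · rintro ⟨m, n, hn, rfl⟩ h
    exact hn ((Int.natCast_dvd_natCast.mpr h).trans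
      (by rw [← Rat.divInt_eq_div]; exact Rat.den_dvd m n))
  · exact fun h => ⟨x.num, x.den, by exact_mod_cast h, (Rat.num_div_den x).symm⟩

theorem mem_or_inv_mem (x : ℚ) : x ∈ ZLoc p hp ∨ x⁻¹ ∈ ZLoc p hp := by
  simp only [mem_iff]
  by_cases hden : p ∣ x.den
  · have hx : x ≠ 0 := by
      rintro rfl
      exact hp.not_dvd_one hden
    refine .inr fun hnum => hp.not_dvd_one ?_
    rw [Rat.den_inv_of_ne_zero hx] at hnum
    rw [← x.reduced.gcd_eq_one]
    exact Nat.dvd_gcd hnum hden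
  · exact .inl hden

def valuationSubring : ValuationSubring ℚ where
  toSubring := ZLoc p hp
  mem_or_inv_mem' := mem_or_inv_mem p hp

instance : IsLocalRing (ZLoc p hp) :=
  inferInstanceAs (IsLocalRing (valuationSubring p hp))

theorem isUnit_two (hp2 : p ≠ 2) : IsUnit (2 : ZLoc p hp) := by
  have half_mem : (2⁻¹ : ℚ) ∈ ZLoc p hp := by
    have two_not_dvd : ¬ p ∣ 2 := (Nat.prime_dvd_prime_iff_eq hp Nat.prime_two).not.mpr hp2
    exact ⟨1, 2, by exact_mod_cast two_not_dvd, by norm_num⟩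
  exact .of_mul_eq_one ⟨2⁻¹, half_mem⟩ (Subtype.ext (mul_inv_cancel₀ two_ne_zero))

end ZLoc

theorem M2_powerSeries_ZLoc_very_clean (p : ℕ) (hp : p.Prime) (hp2 : p ≠ 2) :
    VeryCleanRing (Matrix (Fin 2) (Fin 2) (PowerSeries ↥(ZLoc p hp))) := by
  refine Matrix.veryCleanRing_fin_two_of_isUnit_two ?_
  simpa only [map_ofNat] using (ZLoc.isUnit_two p hp hp2).map (PowerSeries.C (R := ZLoc p hp))
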